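/- arXiv:2004.13942 — 3 statements merged into one kernel-verified Lean document; each statement's English description precedes it below -/
import Mathlib

section
/- Let t0 be a real number, let Tc > 0 and α > 0, let n ≥ 1 and i with 1 ≤ i ≤ n be natural numbers, let j be a natural number, let β > 0 satisfy β/α > n, and let b : ℝ → ℝ be a bounded function. Define φ(t) = -α⁻¹·ln(1 - (t - t0)/Tc) for t ∈ [t0, t0 + Tc). Then the limit, as t tends to (t0 + Tc) from the left, of (1/(α·(Tc - (t - t0))))^{i-1} · φ(t)^j · exp(-β·φ(t)) · b(φ(t)) is 0. -/
/-!
The time transformation turns the gain into an exponential: `1 / (α (Tc - (t - t0))) = e^{α φ(t)} / (α Tc)`.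
Hence the term equals `(α Tc)^{-(i-1)} φ^j e^{-(β - α (i-1)) φ} b(φ)`, and since `β > α n ≥ α (i-1)`
and `φ(t) → ∞` as `t → t0 + Tc`, polynomial-times-decaying-exponential times bounded tends to `0`.
-/

open Filter Set Real Topology

lemma tendsto_pow_mul_exp_neg_mul_mul_atTop_nhds_zero {c : ℝ} (hc : 0 < c) (j : ℕ)
    {b : ℝ → ℝ} (hb : IsBoundedUnder (· ≤ ·) atTop (norm ∘ b)) :
    Tendsto (fun τ => τ ^ j * exp (-c * τ) * b τ) atTop (𝓝 0) := by
  have hdecay : Tendsto (fun τ : ℝ => τ ^ j * exp (-c * τ)) atTop (𝓝 0) := by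
    simpa using tendsto_rpow_mul_exp_neg_mul_atTop_nhds_zero j c hc
  exact hdecay.zero_mul_isBoundedUnder_le hb

lemma tendsto_neg_inv_mul_log_one_sub_div_atTop {t0 Tc α : ℝ} (hTc : 0 < Tc) (hα : 0 < α) :
    Tendsto (fun t => -α⁻¹ * log (1 - (t - t0) / Tc)) (𝓝[<] (t0 + Tc)) atTop := by
  have hu : Tendsto (fun t => 1 - (t - t0) / Tc) (𝓝[<] (t0 + Tc)) (𝓝[>] 0) := by
    refine tendsto_nhdsWithin_of_tendsto_nhds_of_eventually_within _ ?_ ?_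
    · have hcont : Continuous (fun t => 1 - (t - t0) / Tc) := by fun_prop
      simpa [hTc.ne'] using (hcont.tendsto (t0 + Tc)).mono_left nhdsWithin_le_nhds
    · filter_upwards [self_mem_nhdsWithin] with t (ht : t < t0 + Tc)
      rw [mem_Ioi, sub_pos, div_lt_one hTc]
      linarith
  exact (tendsto_const_mul_atTop_of_neg (by simpa)).mpr (tendsto_log_nhdsGT_zero.comp hu)

lemma one_div_mul_sub_sub_eq_mul_exp {t0 Tc α t : ℝ} (hTc : 0 < Tc) (hα : α ≠ 0)
    (ht : t < t0 + Tc) :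
    1 / (α * (Tc - (t - t0))) = 1 / (α * Tc) * exp (α * (-α⁻¹ * log (1 - (t - t0) / Tc))) := by
  have hu : 0 < 1 - (t - t0) / Tc := by
    rw [sub_pos, div_lt_one hTc]
    linarith
  rw [show α * (-α⁻¹ * log (1 - (t - t0) / Tc)) = -log (1 - (t - t0) / Tc) by field_simp,
    exp_neg, exp_log hu]
  field_simp

theorem stmt_5_general (t0 Tc α β : ℝ) (hTc : 0 < Tc) (hα : 0 < α)
    (n i j : ℕ) (hin : i ≤ n)
    (hβα : (n : ℝ) < β / α)
    (b : ℝ → ℝ) (hb : ∃ M : ℝ, ∀ τ : ℝ, |b τ| ≤ M)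
    (φ : ℝ → ℝ)
    (hφ : ∀ t, φ t = -α⁻¹ * Real.log (1 - (t - t0) / Tc)) :
    Filter.Tendsto
      (fun t => (1 / (α * (Tc - (t - t0)))) ^ (i - 1) * (φ t) ^ j *
        Real.exp (-β * φ t) * b (φ t))
      (nhdsWithin (t0 + Tc) (Set.Ico t0 (t0 + Tc))) (nhds 0) := by
  set k := i - 1
  have hc : 0 < β - α * k := by
    have hkn : (k : ℝ) ≤ n := by exact_mod_cast (Nat.sub_le i 1).trans hin
    rw [lt_div_iff₀ hα] at hβα
    nlinarith
  have hφ_atTop : Tendsto φ (𝓝[Ico t0 (t0 + Tc)] (t0 + Tc)) atTop :=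
    ((tendsto_neg_inv_mul_log_one_sub_div_atTop hTc hα).mono_left
      (nhdsWithin_mono _ Ico_subset_Iio_self)).congr fun t => (hφ t).symm
  have hlim := ((tendsto_pow_mul_exp_neg_mul_mul_atTop_nhds_zero hc j
    (isBoundedUnder_of hb)).comp hφ_atTop).const_mul
    ((1 / (α * Tc)) ^ k)
  rw [mul_zero] at hlim
  refine hlim.congr' ?_
  filter_upwards [self_mem_nhdsWithin] with t ht
  rw [one_div_mul_sub_sub_eq_mul_exp hTc hα.ne' ht.2, ← hφ t, mul_pow, ← exp_nat_mul]
  have hexp : exp (-(β - α * k) * φ t) = exp (k * (α * φ t)) * exp (-β * φ t) := by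
    rw [← exp_add]
    ring_nf
  simp only [Function.comp, hexp]
  ring

/-- Lemma 2 of the paper (with η = 1): for `β/α > n`, the term
`κ(t-t0)^{i-1} φ(t)^j e^{-β φ(t)} b(φ(t))`, with `b` bounded, tends to `0`
as `t → (t0 + Tc)⁻`. -/
theorem stmt_5 (t0 Tc α β : ℝ) (hTc : 0 < Tc) (hα : 0 < α) (hβ : 0 < β)
    (n i j : ℕ) (hn : 1 ≤ n) (hi1 : 1 ≤ i) (hin : i ≤ n)
    (hβα : (n : ℝ) < β / α)
    (b : ℝ → ℝ) (hb : ∃ M : ℝ, ∀ τ : ℝ, |b τ| ≤ M)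
    (φ : ℝ → ℝ)
    (hφ : ∀ t, φ t = -α⁻¹ * Real.log (1 - (t - t0) / Tc)) :
    Filter.Tendsto
      (fun t => (1 / (α * (Tc - (t - t0)))) ^ (i - 1) * (φ t) ^ j *
        Real.exp (-β * φ t) * b (φ t))
      (nhdsWithin (t0 + Tc) (Set.Ico t0 (t0 + Tc))) (nhds 0) :=
  stmt_5_general t0 Tc α β hTc hα n i j hin hβα b hb φ hφ
end

section
/- Let n ≥ 1 be a natural number, t0 ∈ ℝ, Tc > 0, α > 0, 0 < η ≤ 1, let υ : ℝⁿ → ℝ be any function, and let δ : ℝ → ℝ. Define κ(s) = η/(α·(Tc - η·s)) for s ∈ [0, Tc/η), φ(t) = -α⁻¹·ln(1 - η·(t - t0)/Tc), ψ(τ) = η⁻¹·Tc·(1 - e^{-ατ}) + t0, and Ω(s) = diag(1, κ(s), …, κ(s)^{n-1}). Suppose x : [t0, t0 + Tc/η) → ℝⁿ is such that for every t in this interval, the i-th component x_i has derivative x_{i+1}(t) at t for i = 1, …, n-1, and x_n has derivative κ(t - t0)ⁿ·υ(Ω(t - t0)⁻¹·x(t)) + δ(t) at t. Define y : [0, ∞)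 → ℝⁿ by y_i(τ) = κ(ψ(τ) - t0)^{1-i}·x_i(ψ(τ)), i.e., y(τ) = Ω(ψ(τ) - t0)⁻¹·x(ψ(τ)). Then for every τ ≥ 0: y_i has derivative y_{i+1}(τ) - α·(i-1)·y_i(τ) at τ for i = 1, …, n-1, and y_n has derivative υ(y(τ)) - α·(n-1)·y_n(τ) + π(τ) at τ, where π(τ) = (α·η⁻¹·Tc·e^{-ατ})ⁿ·δ(ψ(τ)). -/
/-!
Along the new time `τ = φ(t)` (with inverse `ψ = timeChange`) the gain becomes
`g(τ) = κ(ψ(τ) - t0) = η/(α Tc) · e^{ατ}` (`rescaledGain`), which satisfies `g' = α g`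
and `ψ' = 1/g`. Hence for `y_i(τ) = g(τ)^{-i} x_i(ψ(τ))` the chain rule gives
`y_i' = g^{-(i+1)} ẋ_i(ψ) - α i y_i`: the factor `g^{-(i+1)}` turns `ẋ_i = x_{i+1}` into
`y_{i+1}`, and for the last component it cancels the `κⁿ` of the controller and leaves
`g^{-n} δ(ψ) = π` as the transformed disturbance.
-/

theorem HasDerivAt.inv_pow_of_hasDerivAt_mul_self {g : ℝ → ℝ} {α τ : ℝ}
    (hg : HasDerivAt g (α * g τ) τ) (hg0 : g τ ≠ 0) (i : ℕ) :
    HasDerivAt (fun σ => (g σ ^ i)⁻¹) (-(α * i) * (g τ ^ i)⁻¹) τ := by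
  refine ((hg.pow i).inv (pow_ne_zero i hg0)).congr_deriv ?_
  rcases eq_or_ne i 0 with rfl | hi
  · simp
  · rw [mul_assoc, ← mul_assoc (g τ ^ (i - 1)), mul_comm (g τ ^ (i - 1)), mul_assoc,
      pow_sub_one_mul hi]
    simp only [Pi.pow_apply]
    field_simp

theorem HasDerivAt.inv_pow_mul_comp {f g ψ : ℝ → ℝ} {α v τ : ℝ}
    (hf : HasDerivAt f v (ψ τ)) (hψ : HasDerivAt ψ (g τ)⁻¹ τ)
    (hg : HasDerivAt g (α * g τ) τ) (hg0 : g τ ≠ 0) (i : ℕ) :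
    HasDerivAt (fun σ => (g σ ^ i)⁻¹ * f (ψ σ))
      ((g τ ^ (i + 1))⁻¹ * v - α * i * ((g τ ^ i)⁻¹ * f (ψ τ))) τ := by
  refine ((hg.inv_pow_of_hasDerivAt_mul_self hg0 i).mul (hf.comp τ hψ)).congr_deriv ?_
  rw [pow_succ, mul_inv, Function.comp_apply]
  ring

section TimeChange

open Real

noncomputable def rescaledGain (η α Tc σ : ℝ) : ℝ := η / (α * Tc) * exp (α * σ)

noncomputable def timeChange (η α Tc t0 τ : ℝ) : ℝ :=
  η⁻¹ * Tc * (1 - exp (-α * τ)) + t0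

variable {η α Tc : ℝ}

theorem div_mul_sub_timeChange_eq_rescaledGain (hη : η ≠ 0) (t0 σ : ℝ) :
    η / (α * (Tc - η * (timeChange η α Tc t0 σ - t0))) = rescaledGain η α Tc σ := by
  have hden : Tc - η * (timeChange η α Tc t0 σ - t0) = Tc * exp (-α * σ) := by
    rw [timeChange]; field_simp; ring
  rw [hden, rescaledGain, neg_mul, exp_neg, ← mul_assoc, div_mul_eq_div_div, div_inv_eq_mul]

theorem rescaledGain_inv (σ : ℝ) :
    (rescaledGain η α Tc σ)⁻¹ = α * η⁻¹ * Tc * exp (-α * σ) := by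
  rw [rescaledGain, mul_inv, inv_div, neg_mul, exp_neg]
  ring

theorem rescaledGain_ne_zero (hη : η ≠ 0) (hα : α ≠ 0) (hTc : Tc ≠ 0) (σ : ℝ) :
    rescaledGain η α Tc σ ≠ 0 := by
  unfold rescaledGain
  positivity

theorem hasDerivAt_rescaledGain (τ : ℝ) :
    HasDerivAt (rescaledGain η α Tc) (α * rescaledGain η α Tc τ) τ := by
  have h := (((hasDerivAt_id τ).const_mul α).exp).const_mul (η / (α * Tc))
  refine h.congr_deriv ?_
  simp only [rescaledGain, id, mul_one]
  ring

theorem hasDerivAt_timeChange (t0 τ : ℝ) :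
    HasDerivAt (timeChange η α Tc t0) (rescaledGain η α Tc τ)⁻¹ τ := by
  have h := ((((hasDerivAt_id τ).const_mul (-α)).exp.const_sub 1).const_mul
    (η⁻¹ * Tc)).add_const t0
  refine h.congr_deriv ?_
  simp only [rescaledGain_inv, id, mul_one]
  ring

theorem timeChange_mem_Ico (hη : 0 < η) (hα : 0 ≤ α) (hTc : 0 < Tc) (t0 : ℝ) {τ : ℝ}
    (hτ : 0 ≤ τ) : timeChange η α Tc t0 τ ∈ Set.Ico t0 (t0 + Tc / η) := by
  have hexp_pos : 0 < exp (-α * τ) := exp_pos _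
  have hexp_le : exp (-α * τ) ≤ 1 := exp_le_one_iff.mpr (by nlinarith)
  have hscale : 0 < η⁻¹ * Tc := by positivity
  rw [timeChange, div_eq_inv_mul]
  constructor <;> nlinarith

end TimeChange

/-- Core computation in the proof of Theorem 1 of the paper: the coordinate-and-time
change `y(τ) = Ω(ψ(τ) - t0)⁻¹ x(ψ(τ))` (componentwise
`y_i(τ) = κ(ψ(τ) - t0)^{1-i} x_i(ψ(τ))`, here with `0`-based indices) transforms the
perturbed chain of integrators under the controller
`u(t) = κ(t - t0)ⁿ υ(Ω(t - t0)⁻¹ x(t))` into the auxiliary system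
`dy_i/dτ = y_{i+1} - α (i-1) y_i`, `dy_n/dτ = υ(y) - α (n-1) y_n + π(τ)` with
`π(τ) = (α η⁻¹ Tc e^{-ατ})ⁿ δ(ψ(τ))`. -/
theorem stmt_10 (n : ℕ) (hn : 1 ≤ n) (t0 Tc α η : ℝ) (hTc : 0 < Tc) (hα : 0 < α)
    (hη0 : 0 < η)
    (υ : (Fin n → ℝ) → ℝ) (δ : ℝ → ℝ)
    (κ : ℝ → ℝ) (hκ : ∀ s, κ s = η / (α * (Tc - η * s)))
    (ψ : ℝ → ℝ) (hψ : ∀ τ, ψ τ = η⁻¹ * Tc * (1 - Real.exp (-α * τ)) + t0)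
    (x : ℝ → Fin n → ℝ)
    -- chain of integrators: `ẋ_i = x_{i+1}` for `i = 1, …, n-1`
    (hx : ∀ t ∈ Set.Ico t0 (t0 + Tc / η), ∀ i : Fin n, ∀ h : (i : ℕ) + 1 < n,
      HasDerivAt (fun s => x s i) (x t ⟨(i : ℕ) + 1, h⟩) t)
    -- `ẋ_n = κ(t - t0)ⁿ υ(Ω(t - t0)⁻¹ x(t)) + δ(t)`
    (hxn : ∀ t ∈ Set.Ico t0 (t0 + Tc / η),
      HasDerivAt (fun s => x s ⟨n - 1, by omega⟩)
        (κ (t - t0) ^ n * υ (fun j => (κ (t - t0) ^ (j : ℕ))⁻¹ * x t j) + δ t) t)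
    (y : ℝ → Fin n → ℝ)
    (hy : ∀ τ, ∀ i : Fin n, y τ i = (κ (ψ τ - t0) ^ (i : ℕ))⁻¹ * x (ψ τ) i)
    (π : ℝ → ℝ)
    (hπ : ∀ τ, π τ = (α * η⁻¹ * Tc * Real.exp (-α * τ)) ^ n * δ (ψ τ)) :
    ∀ τ : ℝ, 0 ≤ τ →
      (∀ i : Fin n, ∀ h : (i : ℕ) + 1 < n,
        HasDerivAt (fun σ => y σ i)
          (y τ ⟨(i : ℕ) + 1, h⟩ - α * (i : ℕ) * y τ i) τ) ∧
      HasDerivAt (fun σ => y σ ⟨n - 1, by omega⟩)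
        (υ (y τ) - α * ((n : ℝ) - 1) * y τ ⟨n - 1, by omega⟩ + π τ) τ := by
  intro τ hτ
  have hg0 := rescaledGain_ne_zero hη0.ne' hα.ne' hTc.ne' τ
  have hψ_eq : ψ = timeChange η α Tc t0 := funext hψ
  have hκψ : ∀ σ, κ (ψ σ - t0) = rescaledGain η α Tc σ := fun σ => by
    rw [hκ, hψ_eq, div_mul_sub_timeChange_eq_rescaledGain hη0.ne']
  have hyg : ∀ σ j, y σ j = (rescaledGain η α Tc σ ^ (j : ℕ))⁻¹ * x (ψ σ) j :=
    fun σ j => by rw [hy, hκψ]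
  have hψτ : ψ τ ∈ Set.Ico t0 (t0 + Tc / η) :=
    hψ_eq ▸ timeChange_mem_Ico hη0 hα.le hTc t0 hτ
  have rescale {f : ℝ → ℝ} {v : ℝ} (i : ℕ) (hf : HasDerivAt f v (ψ τ)) :=
    hf.inv_pow_mul_comp (hψ_eq ▸ hasDerivAt_timeChange t0 τ) (hasDerivAt_rescaledGain τ) hg0 i
  simp only [hyg]
  refine ⟨fun i h => by simpa using rescale i (hx _ hψτ i h), ?_⟩
  have hlast := rescale (n - 1) (hxn _ hψτ)
  simp only [hκψ, ← hyg, Nat.sub_add_cancel hn] at hlast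
  convert hlast using 1
  rw [hπ, ← rescaledGain_inv, Nat.cast_sub hn, inv_pow]
  field_simp
  ring
end

section
/- Let n ≥ 1 be a natural number, t0 ∈ ℝ, Tc > 0, α > 0, 0 < η ≤ 1. Define κ(s) = η/(α·(Tc - η·s)) for s ∈ [0, Tc/η), ψ(τ) = η⁻¹·Tc·(1 - e^{-ατ}) + t0, φ(t) = -α⁻¹·ln(1 - η·(t - t0)/Tc), and Ω(s) = diag(1, κ(s), …, κ(s)^{n-1}). Let y : [0, ∞) → ℝⁿ and define x : [t0, t0 + Tc/η) → ℝⁿ by x(t) = Ω(t - t0)·y(φ(t)). Then: (a) for every τ ≥ 0, x(ψ(τ)) = 0 if and only if y(τ) = 0; (b) if there is 𝒯 ≥ 0 such that y(τ) = 0 for all τ ≥ 𝒯, then x(t) = 0 for all t ∈ [ψ(𝒯), t0 + Tc/η); and (c) if in addition η = 1 - e^{-α·Tf} for some Tf > 0 and 𝒯 ≤ Tf, then ψ(𝒯) ≤ t0 + Tc, and x(t) = 0 for all t with ψ(𝒯) ≤ t < t0 + Tc/η, in particular for all t ∈ [t0 + Tc, t0 + Tc/η). -/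
/-- Zero-set correspondence under the scaling `x(t) = Ω(t - t0) y(φ(t))`
(componentwise `x_i(t) = κ(t - t0)^{i-1} y_i(φ(t))`, here with `0`-based indices),
used to conclude Theorem 1 of the paper: (a) `x(ψ(τ)) = 0 ↔ y(τ) = 0`;
(b) if `y` vanishes from time `𝒯` on, then `x` vanishes on `[ψ(𝒯), t0 + Tc/η)`;
(c) if moreover `η = 1 - e^{-α Tf}` and `𝒯 ≤ Tf`, then `ψ(𝒯) ≤ t0 + Tc` and `x`
vanishes on `[t0 + Tc, t0 + Tc/η)`. -/
theorem stmt_11 (n : ℕ) (hn : 1 ≤ n) (t0 Tc α η : ℝ) (hTc : 0 < Tc) (hα : 0 < α)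
    (hη0 : 0 < η) (hη1 : η ≤ 1)
    (κ : ℝ → ℝ) (hκ : ∀ s, κ s = η / (α * (Tc - η * s)))
    (ψ : ℝ → ℝ) (hψ : ∀ τ, ψ τ = η⁻¹ * Tc * (1 - Real.exp (-α * τ)) + t0)
    (φ : ℝ → ℝ) (hφ : ∀ t, φ t = -α⁻¹ * Real.log (1 - η * (t - t0) / Tc))
    (y : ℝ → Fin n → ℝ)
    (x : ℝ → Fin n → ℝ)
    (hx : ∀ t, ∀ i : Fin n, x t i = κ (t - t0) ^ (i : ℕ) * y (φ t) i) :
    -- (a)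
    (∀ τ : ℝ, 0 ≤ τ → (x (ψ τ) = 0 ↔ y τ = 0)) ∧
    -- (b)
    (∀ T : ℝ, 0 ≤ T → (∀ τ : ℝ, T ≤ τ → y τ = 0) →
      ∀ t : ℝ, ψ T ≤ t → t < t0 + Tc / η → x t = 0) ∧
    -- (c)
    (∀ Tf : ℝ, 0 < Tf → η = 1 - Real.exp (-α * Tf) →
      ∀ T : ℝ, 0 ≤ T → T ≤ Tf → (∀ τ : ℝ, T ≤ τ → y τ = 0) →
        ψ T ≤ t0 + Tc ∧
        (∀ t : ℝ, ψ T ≤ t → t < t0 + Tc / η → x t = 0) ∧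
        (∀ t : ℝ, t0 + Tc ≤ t → t < t0 + Tc / η → x t = 0)) := by
  have hηne : η ≠ 0 := hη0.ne'
  have hαne : α ≠ 0 := hα.ne'
  have hsub : ∀ τ : ℝ, η * (ψ τ - t0) = Tc * (1 - Real.exp (-α * τ)) := by
    intro τ; rw [hψ]; field_simp; ring
  have hφψ : ∀ τ : ℝ, φ (ψ τ) = τ := by
    intro τ
    have h1 : 1 - η * (ψ τ - t0) / Tc = Real.exp (-α * τ) := by
      rw [hsub]; field_simp; ring
    rw [hφ, h1, Real.log_exp]; field_simp
  have hκψ : ∀ τ : ℝ, κ (ψ τ - t0) ≠ 0 := by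
    intro τ
    have h1 : Tc - η * (ψ τ - t0) = Tc * Real.exp (-α * τ) := by
      rw [hsub]; ring
    rw [hκ, h1]
    exact div_ne_zero hηne (by positivity)
  -- (a)
  have ha : ∀ τ : ℝ, 0 ≤ τ → (x (ψ τ) = 0 ↔ y τ = 0) := by
    intro τ _
    constructor
    · intro h
      funext i
      have := congrFun h i
      rw [hx, hφψ] at this
      simpa using (mul_eq_zero.mp this).resolve_left (pow_ne_zero _ (hκψ τ))
    · intro h
      funext i
      rw [hx, hφψ, h]
      simp
  -- (b)
  have hb : ∀ T : ℝ, 0 ≤ T → (∀ τ : ℝ, T ≤ τ → y τ = 0) →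
      ∀ t : ℝ, ψ T ≤ t → t < t0 + Tc / η → x t = 0 := by
    intro T hT hy t ht1 ht2
    have hu : 0 < 1 - η * (t - t0) / Tc := by
      have : η * (t - t0) < Tc := by
        have := mul_lt_mul_of_pos_left (by linarith : t - t0 < Tc / η) hη0
        rwa [mul_div_cancel₀ _ hηne] at this
      have : η * (t - t0) / Tc < 1 := (div_lt_one hTc).mpr this
      linarith
    have hle : 1 - η * (t - t0) / Tc ≤ Real.exp (-α * T) := by
      have h1 : Tc * (1 - Real.exp (-α * T)) ≤ η * (t - t0) := by
        rw [← hsub]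
        exact mul_le_mul_of_nonneg_left (by linarith) hη0.le
      have h2 : 1 - Real.exp (-α * T) ≤ η * (t - t0) / Tc :=
        (le_div_iff₀ hTc).mpr (by linarith)
      linarith
    have hlog : Real.log (1 - η * (t - t0) / Tc) ≤ -α * T :=
      Real.exp_le_exp.mp (by rwa [Real.exp_log hu])
    have hφt : T ≤ φ t := by
      rw [hφ]
      nlinarith [mul_le_mul_of_nonneg_left hlog (le_of_lt (inv_pos.mpr hα)),
        mul_inv_cancel₀ hαne]
    funext i
    rw [hx, hy _ hφt]
    simp
  refine ⟨ha, hb, ?_⟩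
  -- (c)
  intro Tf hTf hηTf T hT0 hTle hy
  have hψT : ψ T ≤ t0 + Tc := by
    rw [hψ]
    have hexp : Real.exp (-α * Tf) ≤ Real.exp (-α * T) :=
      Real.exp_le_exp.mpr (by nlinarith)
    have : 1 - Real.exp (-α * T) ≤ η := by rw [hηTf]; linarith
    have h2 : η⁻¹ * Tc * (1 - Real.exp (-α * T)) ≤ η⁻¹ * Tc * η :=
      mul_le_mul_of_nonneg_left this (by positivity)
    have h3 : η⁻¹ * Tc * η = Tc := by field_simp
    linarith [h3 ▸ h2]
  exact ⟨hψT, hb T hT0 hy, fun t ht1 ht2 => hb T hT0 hy t (le_trans hψT ht1) ht2⟩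
end
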